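/- Let K be a 2n×2n real symmetric positive definite matrix and Ω the standard symplectic form, and define γ_K^# := K # (Ω K^{-1} Ωᵀ) (geometric mean). Then: (i) there exists a symplectic matrix S with γ_K^# = S Sᵀ; in particular γ_K^# is a pure quantum covariance matrix. (ii) The following three conditions are equivalent: the complex Hermitian matrix K − iΩ is positive definite; K − Ω K^{-1} Ωᵀ is positive definite; K − γ_K^# is positive definite. -/

import Mathlib

open Matrix ComplexOrder

/-- The standard symplectic form on `n` modes: the `2n × 2n` block-diagonal matrix
`⊕_{i=1}^n [[0, 1], [−1, 0]]`. -/
noncomputable def Omega (n : ℕ) : Matrix (Fin 2 × Fin n) (Fin 2 × Fin n) ℝ :=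
  Matrix.blockDiagonal fun _ : Fin n => !![(0 : ℝ), 1; -1, 0]

/-- Real power of a Hermitian (real symmetric) matrix via the spectral decomposition
(junk value `0` on non-Hermitian matrices). -/
noncomputable def rpowMat {ι : Type} [Fintype ι] [DecidableEq ι]
    (M : Matrix ι ι ℝ) (t : ℝ) : Matrix ι ι ℝ :=
  if h : M.IsHermitian then
    (h.eigenvectorUnitary : Matrix ι ι ℝ) *
      Matrix.diagonal (fun i => h.eigenvalues i ^ t) *
      star (h.eigenvectorUnitary : Matrix ι ι ℝ)
  else 0

/-- The geometric mean `M # N := M^{1/2} (M^{-1/2} N M^{-1/2})^{1/2} M^{1/2}` of positive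
definite matrices. -/
noncomputable def geomMean {ι : Type} [Fintype ι] [DecidableEq ι]
    (M N : Matrix ι ι ℝ) : Matrix ι ι ℝ :=
  rpowMat M (1 / 2) *
    rpowMat (rpowMat M (-(1 / 2)) * N * rpowMat M (-(1 / 2))) (1 / 2) *
    rpowMat M (1 / 2)

open scoped MatrixOrder

/-!
Write `R = K^{1/2}` and `M = Ω K⁻¹ Ωᵀ`. Congruence by `R⁻¹` reduces everything to the positive
matrix `W = R⁻¹ M R⁻¹`: `K # M = R W^{1/2} R`, so `K - K # M` and `K - M` are congruent to
`1 - W^{1/2}` and `1 - W`, which are positive definite together. The geometric mean `G = K # M` is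
the unique positive solution of `X K⁻¹ X = M`; as `Ω G⁻¹ Ωᵀ` solves the same equation,
`Ω G⁻¹ Ωᵀ = G`, i.e. `G` is symplectic, and then so is its positive square root `S`, with
`G = S Sᵀ`. Finally `K - iΩ` is congruent to `1 - C` for the Hermitian `C = i R⁻¹ Ω R⁻¹`, which
satisfies `Cᵀ = -C`; hence the spectrum of `C` is symmetric, so `1 - C > 0 ↔ 1 - C² > 0`, and
`1 - C²` is the complexification of a matrix congruent to `K - M`.
-/

variable {ι : Type} [Fintype ι] [DecidableEq ι]

namespace Matrix

theorem IsHermitian.posDef_conj_iff {𝕜 : Type*} [RCLike 𝕜] {R X : Matrix ι ι 𝕜}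
    (hR : R.IsHermitian) (hu : IsUnit R) : (R * X * R).PosDef ↔ X.PosDef := by
  simpa only [star_eq_conjTranspose, hR.eq] using hu.posDef_star_right_conjugate_iff (x := X)

theorem PosDef.mul_mul_transpose {X J : Matrix ι ι ℝ} (hX : X.PosDef) (hJ : IsUnit J) :
    (J * X * Jᵀ).PosDef := by
  simpa only [star_eq_conjTranspose, conjTranspose_eq_transpose_of_trivial] using
    hJ.posDef_star_right_conjugate_iff.mpr hX

theorem IsHermitian.posDef_cfc_iff {𝕜 : Type*} [RCLike 𝕜] {A : Matrix ι ι 𝕜}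
    (hA : A.IsHermitian) (f : ℝ → ℝ) :
    (cfc f A).PosDef ↔ ∀ x ∈ spectrum ℝ A, 0 < f x := by
  rw [← isStrictlyPositive_iff_posDef,
    cfc_isStrictlyPositive_iff f A ((Set.toFinite _).continuousOn _)]

theorem IsHermitian.posDef_one_sub_cfc_iff {𝕜 : Type*} [RCLike 𝕜] {A : Matrix ι ι 𝕜}
    (hA : A.IsHermitian) (f : ℝ → ℝ) :
    (1 - cfc f A).PosDef ↔ ∀ x ∈ spectrum ℝ A, f x < 1 := by
  rw [← cfc_const_one ℝ A, ← cfc_sub _ _ A ((Set.toFinite _).continuousOn _)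
    ((Set.toFinite _).continuousOn _), hA.posDef_cfc_iff]
  simp only [sub_pos]

end Matrix

section RpowMat

variable {M : Matrix ι ι ℝ}

theorem rpowMat_eq_cfc (hM : M.IsHermitian) (t : ℝ) :
    rpowMat M t = cfc (fun x : ℝ => x ^ t) M := by
  rw [hM.cfc_eq, IsHermitian.cfc, Unitary.conjStarAlgAut_apply, rpowMat, dif_pos hM]
  rfl

theorem rpowMat_posDef (hM : M.PosDef) (t : ℝ) : (rpowMat M t).PosDef := by
  rw [rpowMat_eq_cfc hM.isHermitian]
  exact (hM.isHermitian.posDef_cfc_iff _).mpr fun x hx =>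
    Real.rpow_pos_of_pos (hM.isStrictlyPositive.spectrum_pos hx) t

theorem transpose_rpowMat (hM : M.IsHermitian) (t : ℝ) : (rpowMat M t)ᵀ = rpowMat M t := by
  rw [← conjTranspose_eq_transpose_of_trivial, rpowMat_eq_cfc hM]
  exact IsSelfAdjoint.star_eq (cfc_predicate (p := IsSelfAdjoint) _ M)

theorem rpowMat_mul_rpowMat (hM : M.PosDef) (s t : ℝ) :
    rpowMat M s * rpowMat M t = rpowMat M (s + t) := by
  simp only [rpowMat_eq_cfc hM.isHermitian]
  rw [← cfc_mul _ _ M ((Set.toFinite _).continuousOn _) ((Set.toFinite _).continuousOn _)]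
  exact cfc_congr fun x hx => (Real.rpow_add (hM.isStrictlyPositive.spectrum_pos hx) s t).symm

theorem rpowMat_zero (hM : M.IsHermitian) : rpowMat M 0 = 1 := by
  simpa [rpowMat_eq_cfc hM] using cfc_const_one ℝ M

theorem rpowMat_one (hM : M.IsHermitian) : rpowMat M 1 = M := by
  simpa [rpowMat_eq_cfc hM] using cfc_id' ℝ M

theorem rpowMat_half_mul_self (hM : M.PosDef) : rpowMat M (1 / 2) * rpowMat M (1 / 2) = M := by
  rw [rpowMat_mul_rpowMat hM, add_halves, rpowMat_one hM.isHermitian]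

theorem rpowMat_neg_half (hM : M.PosDef) : rpowMat M (-(1 / 2)) = (rpowMat M (1 / 2))⁻¹ :=
  (inv_eq_right_inv (by
    rw [rpowMat_mul_rpowMat hM, add_neg_cancel, rpowMat_zero hM.isHermitian])).symm

theorem inv_eq_rpowMat_half_inv_mul_self (hM : M.PosDef) :
    M⁻¹ = (rpowMat M (1 / 2))⁻¹ * (rpowMat M (1 / 2))⁻¹ := by
  rw [← Matrix.mul_inv_rev, rpowMat_half_mul_self hM]

theorem eq_rpowMat_half_of_mul_self {X : Matrix ι ι ℝ} (hX : X.PosDef) (hM : M.PosDef)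
    (h : X * X = M) : X = rpowMat M (1 / 2) :=
  (CFC.mul_self_eq_mul_self_iff X _ hX.posSemidef.nonneg
    (rpowMat_posDef hM _).posSemidef.nonneg).mp (by rw [h, rpowMat_half_mul_self hM])

theorem posDef_one_sub_rpowMat_iff (hM : M.PosDef) {t : ℝ} (ht : 0 < t) :
    (1 - rpowMat M t).PosDef ↔ (1 - M).PosDef := by
  conv_rhs => rw [← cfc_id' ℝ M]
  rw [rpowMat_eq_cfc hM.isHermitian, hM.isHermitian.posDef_one_sub_cfc_iff,
    hM.isHermitian.posDef_one_sub_cfc_iff]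
  refine forall₂_congr fun x hx => ?_
  simp [Real.rpow_lt_one_iff_of_pos (hM.isStrictlyPositive.spectrum_pos hx), ht, ht.not_gt]

end RpowMat

section GeomMean

variable {A B : Matrix ι ι ℝ}

theorem geomMean_eq_of_posDef (hA : A.PosDef) : geomMean A B =
    rpowMat A (1 / 2) *
      rpowMat ((rpowMat A (1 / 2))⁻¹ * B * (rpowMat A (1 / 2))⁻¹) (1 / 2) * rpowMat A (1 / 2) := by
  rw [geomMean, rpowMat_neg_half hA]

theorem posDef_rpowMat_half_inv_conj (hA : A.PosDef) (hB : B.PosDef) :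
    ((rpowMat A (1 / 2))⁻¹ * B * (rpowMat A (1 / 2))⁻¹).PosDef :=
  have hR := (rpowMat_posDef hA (1 / 2)).inv
  (hR.isHermitian.posDef_conj_iff hR.isUnit).mpr hB

theorem geomMean_posDef (hA : A.PosDef) (hB : B.PosDef) : (geomMean A B).PosDef := by
  have hR := rpowMat_posDef hA (1 / 2)
  rw [geomMean_eq_of_posDef hA]
  exact (hR.isHermitian.posDef_conj_iff hR.isUnit).mpr
    (rpowMat_posDef (posDef_rpowMat_half_inv_conj hA hB) _)

theorem geomMean_mul_inv_mul_geomMean (hA : A.PosDef) (hB : B.PosDef) :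
    geomMean A B * A⁻¹ * geomMean A B = B := by
  have hT := rpowMat_half_mul_self (posDef_rpowMat_half_inv_conj hA hB)
  have hRdet := (rpowMat_posDef hA (1 / 2)).det_pos.ne'.isUnit
  rw [geomMean_eq_of_posDef hA, inv_eq_rpowMat_half_inv_mul_self hA]
  generalize rpowMat (_ * B * _) (1 / 2) = T at hT ⊢
  generalize rpowMat A (1 / 2) = R at hRdet hT ⊢
  calc R * T * R * (R⁻¹ * R⁻¹) * (R * T * R) = R * (T * T) * R := by
        simp only [Matrix.mul_assoc, mul_nonsing_inv_cancel_left _ _ hRdet,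
          nonsing_inv_mul_cancel_left _ _ hRdet]
    _ = B := by
        rw [hT]
        simp only [Matrix.mul_assoc, mul_nonsing_inv_cancel_left _ _ hRdet,
          nonsing_inv_mul _ hRdet, Matrix.mul_one]

theorem eq_geomMean_of_mul_inv_mul {X : Matrix ι ι ℝ} (hA : A.PosDef) (hB : B.PosDef)
    (hX : X.PosDef) (h : X * A⁻¹ * X = B) : X = geomMean A B := by
  have hRdet := (rpowMat_posDef hA (1 / 2)).det_pos.ne'.isUnit
  rw [inv_eq_rpowMat_half_inv_mul_self hA] at h
  rw [geomMean_eq_of_posDef hA, ← eq_rpowMat_half_of_mul_self (posDef_rpowMat_half_inv_conj hA hX)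
    (posDef_rpowMat_half_inv_conj hA hB) (by rw [← h]; simp only [Matrix.mul_assoc])]
  simp only [Matrix.mul_assoc, mul_nonsing_inv_cancel_left _ _ hRdet, nonsing_inv_mul _ hRdet,
    Matrix.mul_one]

theorem posDef_sub_geomMean_iff (hA : A.PosDef) (hB : B.PosDef) :
    (A - geomMean A B).PosDef ↔ (A - B).PosDef := by
  have hR := rpowMat_posDef hA (1 / 2)
  have hRdet := hR.det_pos.ne'.isUnit
  have hsub : ∀ X, A - rpowMat A (1 / 2) * X * rpowMat A (1 / 2) =
      rpowMat A (1 / 2) * (1 - X) * rpowMat A (1 / 2) := fun X => by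
    rw [Matrix.mul_sub, Matrix.sub_mul, Matrix.mul_one, rpowMat_half_mul_self hA]
  have hBconj : B = rpowMat A (1 / 2) * ((rpowMat A (1 / 2))⁻¹ * B * (rpowMat A (1 / 2))⁻¹) *
      rpowMat A (1 / 2) := by
    simp only [Matrix.mul_assoc, mul_nonsing_inv_cancel_left _ _ hRdet, nonsing_inv_mul _ hRdet,
      Matrix.mul_one]
  conv_rhs => rw [hBconj]
  rw [geomMean_eq_of_posDef hA, hsub, hsub, hR.isHermitian.posDef_conj_iff hR.isUnit,
    hR.isHermitian.posDef_conj_iff hR.isUnit,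
    posDef_one_sub_rpowMat_iff (posDef_rpowMat_half_inv_conj hA hB) (by norm_num)]

end GeomMean

section Symplectic

variable {J : Matrix ι ι ℝ}

theorem conj_inv_geomMean_eq_self {K : Matrix ι ι ℝ} (hK : K.PosDef) (hJ : J * Jᵀ = 1)
    (hJt : Jᵀ = -J) :
    J * (geomMean K (J * K⁻¹ * Jᵀ))⁻¹ * Jᵀ = geomMean K (J * K⁻¹ * Jᵀ) := by
  have hJu : IsUnit J := IsUnit.of_mul_eq_one _ hJ
  have hM : (J * K⁻¹ * Jᵀ).PosDef := hK.inv.mul_mul_transpose hJu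
  have hG := geomMean_posDef hK hM
  have hGdet := hG.det_pos.ne'.isUnit
  have hriccati := geomMean_mul_inv_mul_geomMean hK hM
  set G := geomMean K (J * K⁻¹ * Jᵀ)
  have hGMG : G⁻¹ * (J * K⁻¹ * Jᵀ) * G⁻¹ = K⁻¹ := by
    rw [← hriccati]
    simp only [Matrix.mul_assoc, nonsing_inv_mul_cancel_left _ _ hGdet, mul_nonsing_inv _ hGdet,
      Matrix.mul_one]
  have hJKJ : Jᵀ * K⁻¹ * J = J * K⁻¹ * Jᵀ := by
    simp only [hJt, Matrix.neg_mul, Matrix.mul_neg]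
  refine eq_geomMean_of_mul_inv_mul hK hM (hG.inv.mul_mul_transpose hJu) ?_
  calc J * G⁻¹ * Jᵀ * K⁻¹ * (J * G⁻¹ * Jᵀ) = J * (G⁻¹ * (Jᵀ * K⁻¹ * J) * G⁻¹) * Jᵀ := by
        simp only [Matrix.mul_assoc]
    _ = J * K⁻¹ * Jᵀ := by rw [hJKJ, hGMG]

theorem rpowMat_half_mul_mul_transpose {G : Matrix ι ι ℝ} (hG : G.PosDef) (hJ : J * Jᵀ = 1)
    (h : J * G⁻¹ * Jᵀ = G) : rpowMat G (1 / 2) * J * (rpowMat G (1 / 2))ᵀ = J := by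
  have hJu : IsUnit J := IsUnit.of_mul_eq_one _ hJ
  have hJ' : Jᵀ * J = 1 := mul_eq_one_comm.mp hJ
  have hS := rpowMat_posDef hG (1 / 2)
  have hSdet := hS.det_pos.ne'.isUnit
  have hJS : J * (rpowMat G (1 / 2))⁻¹ * Jᵀ = rpowMat G (1 / 2) := by
    refine eq_rpowMat_half_of_mul_self (hS.inv.mul_mul_transpose hJu) hG ?_
    calc J * (rpowMat G (1 / 2))⁻¹ * Jᵀ * (J * (rpowMat G (1 / 2))⁻¹ * Jᵀ)
        = J * (rpowMat G (1 / 2) * rpowMat G (1 / 2))⁻¹ * Jᵀ := by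
          rw [Matrix.mul_inv_rev]
          simp only [Matrix.mul_assoc, ← Matrix.mul_assoc Jᵀ J, hJ', Matrix.one_mul]
      _ = G := by rw [rpowMat_half_mul_self hG, h]
  calc rpowMat G (1 / 2) * J * (rpowMat G (1 / 2))ᵀ
      = J * (rpowMat G (1 / 2))⁻¹ * Jᵀ * J * rpowMat G (1 / 2) := by
        rw [transpose_rpowMat hG.isHermitian, hJS]
    _ = J := by
      rw [Matrix.mul_assoc _ Jᵀ J, hJ', Matrix.mul_one, Matrix.mul_assoc,
        nonsing_inv_mul _ hSdet, Matrix.mul_one]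

theorem exists_symplectic_geomMean_eq_mul_transpose {K : Matrix ι ι ℝ} (hK : K.PosDef)
    (hJ : J * Jᵀ = 1) (hJt : Jᵀ = -J) :
    ∃ S : Matrix ι ι ℝ, S * J * Sᵀ = J ∧ geomMean K (J * K⁻¹ * Jᵀ) = S * Sᵀ := by
  have hG := geomMean_posDef hK (hK.inv.mul_mul_transpose (IsUnit.of_mul_eq_one _ hJ))
  refine ⟨rpowMat _ (1 / 2),
    rpowMat_half_mul_mul_transpose hG hJ (conj_inv_geomMean_eq_self hK hJ hJt), ?_⟩
  rw [transpose_rpowMat hG.isHermitian, rpowMat_half_mul_self hG]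

end Symplectic

section Complexification

theorem Matrix.posDef_map_ofReal_iff {A : Matrix ι ι ℝ} :
    (A.map (fun x => (x : ℂ))).PosDef ↔ A.PosDef := by
  have hstar : Function.Semiconj (fun x : ℝ => (x : ℂ)) star star := fun x => by simp
  constructor
  · intro h
    refine .of_dotProduct_mulVec_pos
      ((isHermitian_map_iff hstar Complex.ofReal_injective).mp h.isHermitian) fun x hx => ?_
    have hx' : (fun i => (x i : ℂ)) ≠ 0 := fun h0 =>
      hx (funext fun i => Complex.ofReal_injective (congrFun h0 i))
    have key : star (fun i => (x i : ℂ)) ⬝ᵥ A.map (fun x => (x : ℂ)) *ᵥ (fun i => (x i : ℂ)) =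
        ((star x ⬝ᵥ A *ᵥ x : ℝ) : ℂ) := by
      push_cast [dotProduct, mulVec]
      simp
    simpa [key] using h.dotProduct_mulVec_pos hx'
  · intro h
    have hR := rpowMat_posDef h (1 / 2)
    have hA : A = rpowMat A (1 / 2) * 1 * rpowMat A (1 / 2) := by
      rw [Matrix.mul_one, rpowMat_half_mul_self h]
    change ((Complex.ofRealHom).mapMatrix A).PosDef
    rw [hA, map_mul, map_mul, map_one]
    exact ((hR.isHermitian.map _ hstar).posDef_conj_iff
      (hR.isUnit.map (Complex.ofRealHom).mapMatrix)).mpr PosDef.one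

theorem Matrix.IsHermitian.posDef_one_sub_iff_posDef_one_sub_sq {C : Matrix ι ι ℂ}
    (hC : C.IsHermitian) (hCt : Cᵀ = -C) : (1 - C).PosDef ↔ (1 - C ^ 2).PosDef := by
  have h1 := hC.posDef_one_sub_cfc_iff (fun x => x)
  have h2 := hC.posDef_one_sub_cfc_iff (- ·)
  have h3 := hC.posDef_one_sub_cfc_iff (· ^ 2)
  rw [cfc_id' ℝ C] at h1
  rw [cfc_neg_id (R := ℝ) (a := C), sub_neg_eq_add] at h2
  rw [cfc_pow_id (R := ℝ) C 2] at h3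
  -- transposition exchanges `1 - C` and `1 + C`, so the spectrum of `C` lies in `(-1, 1)`
  have htr : (1 - C).PosDef → (1 + C).PosDef := fun h => by
    simpa [hCt, sub_neg_eq_add] using h.transpose
  rw [h3]
  refine ⟨fun h x hx => ?_, fun h => h1.mpr fun x hx => ?_⟩
  · nlinarith [h1.mp h x hx, h2.mp (htr h) x hx]
  · nlinarith [h x hx]

theorem Matrix.posDef_one_sub_I_smul_map_iff {B : Matrix ι ι ℝ} (hBt : Bᵀ = -B) :
    (1 - Complex.I • B.map (fun x => (x : ℂ))).PosDef ↔ (1 - B * Bᵀ).PosDef := by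
  set φ := (Complex.ofRealHom).mapMatrix (m := ι)
  change (1 - Complex.I • φ B).PosDef ↔ _
  have hφt : ∀ X, (φ X)ᵀ = φ Xᵀ := fun X => rfl
  have hφH : ∀ X, (φ X)ᴴ = φ Xᵀ := fun X => by
    ext i j; simp [φ]
  have hC : (Complex.I • φ B).IsHermitian := by
    rw [IsHermitian, conjTranspose_smul, hφH, hBt, map_neg]
    simp
  have hCt : (Complex.I • φ B)ᵀ = -(Complex.I • φ B) := by
    rw [transpose_smul, hφt, hBt, map_neg, smul_neg]
  have hsq : (Complex.I • φ B) ^ 2 = φ (B * Bᵀ) := by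
    rw [sq, smul_mul_smul_comm, Complex.I_mul_I, hBt, Matrix.mul_neg, map_neg, map_mul,
      neg_one_smul]
  rw [hC.posDef_one_sub_iff_posDef_one_sub_sq hCt, hsq, ← map_one φ, ← map_sub]
  exact posDef_map_ofReal_iff

theorem Matrix.PosDef.posDef_sub_I_smul_map_iff {K J : Matrix ι ι ℝ} (hK : K.PosDef)
    (hJt : Jᵀ = -J) :
    (K.map (fun x => (x : ℂ)) - Complex.I • J.map (fun x => (x : ℂ))).PosDef ↔
      (K - J * K⁻¹ * Jᵀ).PosDef := by
  have hR := (rpowMat_posDef hK (1 / 2)).inv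
  have hRK : (rpowMat K (1 / 2))⁻¹ * K * (rpowMat K (1 / 2))⁻¹ = 1 := by
    have hdet := (rpowMat_posDef hK (1 / 2)).det_pos.ne'.isUnit
    nth_rewrite 2 [← rpowMat_half_mul_self hK]
    simp only [nonsing_inv_mul_cancel_left _ _ hdet, mul_nonsing_inv _ hdet]
  have hKinv := inv_eq_rpowMat_half_inv_mul_self hK
  generalize (rpowMat K (1 / 2))⁻¹ = R at hR hRK hKinv
  have hRt : Rᵀ = R := by rw [← conjTranspose_eq_transpose_of_trivial, hR.isHermitian.eq]
  set φ := (Complex.ofRealHom).mapMatrix (m := ι)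
  change (φ K - Complex.I • φ J).PosDef ↔ _
  have hφR : (φ R).IsHermitian := hR.isHermitian.map _ fun x => by simp
  have hlhs : φ R * (φ K - Complex.I • φ J) * φ R = 1 - Complex.I • φ (R * J * R) := by
    simp only [Matrix.mul_sub, Matrix.sub_mul, Matrix.mul_smul, Matrix.smul_mul, ← map_mul, hRK,
      map_one]
  have hrhs : R * (K - J * K⁻¹ * Jᵀ) * R = 1 - (R * J * R) * (R * J * R)ᵀ := by
    simp only [Matrix.mul_sub, Matrix.sub_mul, hRK, hKinv, transpose_mul, hRt, Matrix.mul_assoc]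
  rw [← hφR.posDef_conj_iff (hR.isUnit.map φ), hlhs, ← hR.isHermitian.posDef_conj_iff hR.isUnit,
    hrhs]
  refine posDef_one_sub_I_smul_map_iff ?_
  simp only [transpose_mul, hRt, hJt, Matrix.mul_neg, Matrix.neg_mul, Matrix.mul_assoc]

end Complexification

theorem transpose_omega (n : ℕ) : (Omega n)ᵀ = -Omega n := by
  rw [Omega, blockDiagonal_transpose, ← blockDiagonal_neg]
  congr 1
  ext k i j
  fin_cases i <;> fin_cases j <;> simp

theorem omega_mul_transpose (n : ℕ) : Omega n * (Omega n)ᵀ = 1 := by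
  rw [Omega, blockDiagonal_transpose, ← blockDiagonal_mul, ← blockDiagonal_one]
  congr 1
  ext k i j
  fin_cases i <;> fin_cases j <;> simp [mul_apply, Fin.sum_univ_two]

/-- **Properties of `γ_K^# := K # (Ω K⁻¹ Ωᵀ)`.** For a `2n × 2n` real symmetric positive
definite `K`: (i) `γ_K^# = S Sᵀ` for some symplectic `S` (so `γ_K^#` is a pure quantum
covariance matrix); (ii) `K − iΩ` positive definite, `K − Ω K⁻¹ Ωᵀ` positive definite and
`K − γ_K^#` positive definite are equivalent conditions. -/
theorem geomMean_pure_qcm (n : ℕ)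
    (K : Matrix (Fin 2 × Fin n) (Fin 2 × Fin n) ℝ) (hK : K.PosDef) :
    (∃ S : Matrix (Fin 2 × Fin n) (Fin 2 × Fin n) ℝ,
        S * Omega n * Sᵀ = Omega n ∧ geomMean K (Omega n * K⁻¹ * (Omega n)ᵀ) = S * Sᵀ)
    ∧ ((K.map (fun x => (x : ℂ)) - Complex.I • (Omega n).map (fun x => (x : ℂ))).PosDef
        ↔ (K - Omega n * K⁻¹ * (Omega n)ᵀ).PosDef)
    ∧ ((K - Omega n * K⁻¹ * (Omega n)ᵀ).PosDef
        ↔ (K - geomMean K (Omega n * K⁻¹ * (Omega n)ᵀ)).PosDef) := by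
  have hM : (Omega n * K⁻¹ * (Omega n)ᵀ).PosDef :=
    hK.inv.mul_mul_transpose (IsUnit.of_mul_eq_one _ (omega_mul_transpose n))
  exact ⟨exists_symplectic_geomMean_eq_mul_transpose hK (omega_mul_transpose n) (transpose_omega n),
    hK.posDef_sub_I_smul_map_iff (transpose_omega n), (posDef_sub_geomMean_iff hK hM).symm⟩
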